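/- arXiv:1512.07275 — 2 statements merged into one kernel-verified Lean document; each statement's English description precedes it below -/
import Mathlib

section
/- Let S be an additive commutative monoid and let F be a nonempty set of positive integers closed under multiplication. (i) If A, B ⊆ S are F-disjoint, then their F-convex hulls conv_F(A) and conv_F(B) are disjoint. (ii) Conversely, if one of the sets A or B is contained in some F-konvex subset of S and conv_F(A) ∩ conv_F(B) = ∅, then A and B are F-disjoint. -/
open Pointwise

/-- The dilation `nA = {n • x : x ∈ A}`. -/
def dilate {S : Type*} [AddCommMonoid S] (n : ℕ) (A : Set S) : Set S :=
  (fun x => n • x) '' A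

/-- The "inverse dilation" `n⁻¹A = {x : n • x ∈ A}`. -/
def invDilate {S : Type*} [AddCommMonoid S] (n : ℕ) (A : Set S) : Set S :=
  {x | n • x ∈ A}

/-- The `n`-fold sumset `[n]A = {x₁ + ⋯ + xₙ : xᵢ ∈ A}`. -/
def foldSum {S : Type*} [AddCommMonoid S] (n : ℕ) (A : Set S) : Set S :=
  {y | ∃ f : Fin n → S, (∀ i, f i ∈ A) ∧ y = ∑ i, f i}

/-- `A` is `n`-convex if `n⁻¹([n]A) ⊆ A`. -/
def IsNConvex {S : Type*} [AddCommMonoid S] (n : ℕ) (A : Set S) : Prop :=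
  invDilate n (foldSum n A) ⊆ A

/-- `A` is `n`-konvex if `[n]A ⊆ nA`. -/
def IsNKonvex {S : Type*} [AddCommMonoid S] (n : ℕ) (A : Set S) : Prop :=
  foldSum n A ⊆ dilate n A

/-- `A` is `F`-convex if it is `n`-convex for every `n ∈ F`. -/
def IsFConvex {S : Type*} [AddCommMonoid S] (F : Set ℕ) (A : Set S) : Prop :=
  ∀ n ∈ F, IsNConvex n A

/-- `A` is `F`-konvex if it is `n`-konvex for every `n ∈ F`. -/
def IsFKonvex {S : Type*} [AddCommMonoid S] (F : Set ℕ) (A : Set S) : Prop :=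
  ∀ n ∈ F, IsNKonvex n A

/-- The `F`-convex hull of `A`. -/
def convHullF {S : Type*} [AddCommMonoid S] (F : Set ℕ) (A : Set S) : Set S :=
  ⋂₀ {C | A ⊆ C ∧ IsFConvex F C}

/-- The set of positive integers. -/
def posNat : Set ℕ := {n | 0 < n}

/-- `A` and `B` are `F`-disjoint if `[n]A ∩ [n]B = ∅` for all `n ∈ F`. -/
def FDisjoint {S : Type*} [AddCommMonoid S] (F : Set ℕ) (A B : Set S) : Prop :=
  ∀ n ∈ F, foldSum n A ∩ foldSum n B = ∅

section Aux

variable {S : Type*} [AddCommMonoid S] {A B : Set S}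

lemma foldSum_mono (h : A ⊆ B) (n : ℕ) : foldSum n A ⊆ foldSum n B := by
  rintro y ⟨f, hf, rfl⟩
  exact ⟨f, fun i => h (hf i), rfl⟩

lemma add_mem_foldSum {m k : ℕ} {y z : S} (hy : y ∈ foldSum m A)
    (hz : z ∈ foldSum k A) : y + z ∈ foldSum (m + k) A := by
  obtain ⟨f, hf, rfl⟩ := hy
  obtain ⟨g, hg, rfl⟩ := hz
  refine ⟨Fin.append f g, fun i => ?_, ?_⟩
  · refine Fin.addCases (fun j => ?_) (fun j => ?_) i
    · simpa using hf j
    · simpa using hg j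
  · rw [Fin.sum_univ_add]
    simp

lemma sum_mem_foldSum {M : ℕ} :
    ∀ {n : ℕ} (g : Fin n → S), (∀ i, g i ∈ foldSum M A) → (∑ i, g i) ∈ foldSum (n * M) A := by
  intro n
  induction n with
  | zero =>
    intro g _
    rw [Nat.zero_mul]
    exact ⟨g, fun i => i.elim0, rfl⟩
  | succ n ih =>
    intro g hg
    rw [Fin.sum_univ_succ]
    have h := add_mem_foldSum (hg 0) (ih (fun i => g i.succ) (fun i => hg i.succ))
    have hEq : M + n * M = (n + 1) * M := by ring
    rwa [hEq] at h

lemma smul_mem_foldSum {m : ℕ} {y : S} (hy : y ∈ foldSum m A) (k : ℕ) :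
    k • y ∈ foldSum (k * m) A := by
  have := sum_mem_foldSum (fun _ : Fin k => y) (fun _ => hy)
  simpa using this

lemma mem_foldSum_self {x : S} (hx : x ∈ A) (n : ℕ) : n • x ∈ foldSum n A :=
  ⟨fun _ => x, fun _ => hx, by simp⟩

lemma prod_mem_F {F : Set ℕ} (hmul : ∀ m ∈ F, ∀ n ∈ F, m * n ∈ F) :
    ∀ {n : ℕ}, n ≠ 0 → ∀ m : Fin n → ℕ, (∀ i, m i ∈ F) → ∏ i, m i ∈ F := by
  intro n
  induction n with
  | zero => intro h; exact absurd rfl h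
  | succ n ih =>
    intro _ m hm
    rcases Nat.eq_zero_or_pos n with rfl | hn
    · simpa using hm 0
    · rw [Fin.prod_univ_succ]
      exact hmul _ (hm 0) _ (ih hn.ne' (fun i => m i.succ) (fun i => hm i.succ))

/-- The "radical" closure: `x` with `n • x ∈ [n]A` for some `n ∈ F`. -/
def clF {S : Type*} [AddCommMonoid S] (F : Set ℕ) (A : Set S) : Set S :=
  {x | ∃ n ∈ F, n • x ∈ foldSum n A}

lemma subset_clF {F : Set ℕ} (hF : F.Nonempty) : A ⊆ clF F A := by
  obtain ⟨n₀, hn₀⟩ := hF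
  exact fun x hx => ⟨n₀, hn₀, mem_foldSum_self hx n₀⟩

lemma isFConvex_clF {F : Set ℕ} (hpos : ∀ n ∈ F, 0 < n)
    (hmul : ∀ m ∈ F, ∀ n ∈ F, m * n ∈ F) : IsFConvex F (clF F A) := by
  intro n hn x hx
  obtain ⟨f, hf, hsum⟩ := hx
  choose m hmF hmem using hf
  set M := ∏ i, m i with hM
  have hMF : M ∈ F := prod_mem_F hmul (hpos n hn).ne' m hmF
  have hMi : ∀ i, M • f i ∈ foldSum M A := by
    intro i
    obtain ⟨k, hk⟩ : m i ∣ M := Finset.dvd_prod_of_mem m (Finset.mem_univ i)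
    rw [hk, mul_nsmul]
    have := smul_mem_foldSum (hmem i) k
    rwa [mul_comm] at this
  have key : (n * M) • x = ∑ i, M • f i := by
    rw [mul_nsmul, hsum, Finset.smul_sum]
  exact ⟨n * M, hmul n hn M hMF, key ▸ sum_mem_foldSum (fun i => M • f i) hMi⟩

lemma convHullF_subset_clF {F : Set ℕ} (hF : F.Nonempty) (hpos : ∀ n ∈ F, 0 < n)
    (hmul : ∀ m ∈ F, ∀ n ∈ F, m * n ∈ F) : convHullF F A ⊆ clF F A :=
  Set.sInter_subset_of_mem ⟨subset_clF hF, isFConvex_clF hpos hmul⟩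

lemma key2 {F : Set ℕ} {C : Set S} (hAC : A ⊆ C) (hK : IsFKonvex F C)
    (h : convHullF F A ∩ convHullF F B = ∅) : FDisjoint F A B := by
  intro n hn
  rw [Set.eq_empty_iff_forall_notMem]
  rintro z ⟨hzA, hzB⟩
  obtain ⟨c, -, hc'⟩ := hK n hn (foldSum_mono hAC n hzA)
  have hc : n • c = z := hc'
  have hcA : c ∈ convHullF F A := by
    apply Set.mem_sInter.mpr
    rintro D ⟨hAD, hDconv⟩
    exact hDconv n hn (show n • c ∈ foldSum n D from hc ▸ foldSum_mono hAD n hzA)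
  have hcB : c ∈ convHullF F B := by
    apply Set.mem_sInter.mpr
    rintro D ⟨hBD, hDconv⟩
    exact hDconv n hn (show n • c ∈ foldSum n D from hc ▸ foldSum_mono hBD n hzB)
  exact Set.eq_empty_iff_forall_notMem.mp h c ⟨hcA, hcB⟩

end Aux

theorem stmt16 {S : Type*} [AddCommMonoid S] (F : Set ℕ) (hF : F.Nonempty)
    (hpos : ∀ n ∈ F, 0 < n) (hmul : ∀ m ∈ F, ∀ n ∈ F, m * n ∈ F) (A B : Set S) :
    (FDisjoint F A B → convHullF F A ∩ convHullF F B = ∅) ∧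
    ((∃ C : Set S, (A ⊆ C ∨ B ⊆ C) ∧ IsFKonvex F C) →
      convHullF F A ∩ convHullF F B = ∅ → FDisjoint F A B) := by
  constructor
  · intro hd
    rw [Set.eq_empty_iff_forall_notMem]
    rintro x ⟨hxA, hxB⟩
    obtain ⟨m, hmF, hmx⟩ := convHullF_subset_clF hF hpos hmul hxA
    obtain ⟨n, hnF, hnx⟩ := convHullF_subset_clF hF hpos hmul hxB
    have h1 : (m * n) • x ∈ foldSum (n * m) A := by
      rw [mul_nsmul]
      exact smul_mem_foldSum hmx n
    have h2 : (n * m) • x ∈ foldSum (m * n) B := by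
      rw [mul_nsmul]
      exact smul_mem_foldSum hnx m
    rw [mul_comm m n] at h1 h2
    exact Set.eq_empty_iff_forall_notMem.mp (hd (n * m) (hmul n hnF m hmF))
      ((n * m) • x) ⟨h1, h2⟩
  · rintro ⟨C, hC | hC, hK⟩ h
    · exact key2 hC hK h
    · have := key2 hC hK (by rwa [Set.inter_comm] at h)
      intro n hn
      rw [Set.inter_comm]
      exact this n hn
end

section
/- Let S be an additive commutative monoid, let A, B ⊆ S be ℕ-disjoint sets (i.e., [n]A ∩ [n]B = ∅ for every positive integer n), and let s ∈ S. Then either A and B ∪ {s} are ℕ-disjoint, or A ∪ {s} and B are ℕ-disjoint. -/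
open Pointwise

lemma foldSum_zero {S : Type*} [AddCommMonoid S] (A : Set S) : foldSum 0 A = {0} := by
  ext y
  simp only [foldSum, Set.mem_setOf_eq, Set.mem_singleton_iff]
  constructor
  · rintro ⟨f, -, rfl⟩; simp
  · rintro rfl; exact ⟨fun i => i.elim0, fun i => i.elim0, by simp⟩

lemma mem_foldSum_one {S : Type*} [AddCommMonoid S] {A : Set S} {a : S} (ha : a ∈ A) :
    a ∈ foldSum 1 A := ⟨fun _ => a, fun _ => ha, by simp⟩

lemma add_mem_foldSum_s18 {S : Type*} [AddCommMonoid S] {A : Set S} {m n : ℕ} {x y : S}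
    (hx : x ∈ foldSum m A) (hy : y ∈ foldSum n A) : x + y ∈ foldSum (m + n) A := by
  obtain ⟨f, hf, rfl⟩ := hx
  obtain ⟨g, hg, rfl⟩ := hy
  refine ⟨Fin.append f g, ?_, ?_⟩
  · intro i
    refine Fin.addCases (fun j => ?_) (fun j => ?_) i
    · rw [Fin.append_left]; exact hf j
    · rw [Fin.append_right]; exact hg j
  · rw [Fin.sum_univ_add]
    simp [Fin.append]

lemma smul_mem_foldSum_s18 {S : Type*} [AddCommMonoid S] {A : Set S} {n : ℕ} {x : S}
    (hx : x ∈ foldSum n A) (l : ℕ) : l • x ∈ foldSum (l * n) A := by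
  induction l with
  | zero => simp [foldSum_zero]
  | succ l ih =>
      have := add_mem_foldSum_s18 ih hx
      rw [succ_nsmul, Nat.succ_mul]
      exact this

lemma foldSum_union_singleton {S : Type*} [AddCommMonoid S] {B : Set S} {s : S} {n : ℕ} {x : S}
    (hx : x ∈ foldSum n (B ∪ {s})) :
    ∃ k ≤ n, ∃ b ∈ foldSum (n - k) B, x = b + k • s := by
  induction n generalizing x with
  | zero =>
      exact ⟨0, le_refl 0, 0, by simp [foldSum_zero], by
        rw [foldSum_zero] at hx; simp at hx; simp [hx]⟩
  | succ n ih =>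
      obtain ⟨f, hf, rfl⟩ := hx
      have hrest : (∑ i : Fin n, f i.succ) ∈ foldSum n (B ∪ {s}) :=
        ⟨fun i => f i.succ, fun i => hf _, rfl⟩
      obtain ⟨k, hk, b, hb, heq⟩ := ih hrest
      rcases hf 0 with h0 | h0
      · refine ⟨k, le_trans hk (Nat.le_succ n), f 0 + b, ?_, ?_⟩
        · have : n + 1 - k = 1 + (n - k) := by omega
          rw [this]
          exact add_mem_foldSum_s18 (mem_foldSum_one h0) hb
        · rw [Fin.sum_univ_succ, heq, add_assoc]
      · simp only [Set.mem_singleton_iff] at h0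
        refine ⟨k + 1, by omega, b, by simpa using hb, ?_⟩
        rw [Fin.sum_univ_succ, heq, h0, succ_nsmul]
        rw [← add_assoc, add_comm (k • s) s, ← add_assoc, add_comm s b]

theorem stmt18 {S : Type*} [AddCommMonoid S] (A B : Set S)
    (hdisj : ∀ n : ℕ, 0 < n → foldSum n A ∩ foldSum n B = ∅) (s : S) :
    (∀ n : ℕ, 0 < n → foldSum n A ∩ foldSum n (B ∪ {s}) = ∅) ∨
    (∀ n : ℕ, 0 < n → foldSum n (A ∪ {s}) ∩ foldSum n B = ∅) := by
  by_contra hcon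
  push_neg at hcon
  obtain ⟨⟨n, hn, hAB⟩, ⟨m, hm, hAB'⟩⟩ := hcon
  obtain ⟨x, hxA, hxB⟩ := hAB
  obtain ⟨y, hyA, hyB⟩ := hAB'
  obtain ⟨k, hk, b, hb, hxeq⟩ := foldSum_union_singleton hxB
  obtain ⟨l, hl, a, ha, hyeq⟩ := foldSum_union_singleton hyA
  rcases Nat.eq_zero_or_pos k with hk0 | hk0
  · subst hk0
    simp at hxeq
    subst hxeq
    have := hdisj n hn
    rw [Set.eq_empty_iff_forall_notMem] at this
    exact this x ⟨hxA, by simpa using hb⟩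
  rcases Nat.eq_zero_or_pos l with hl0 | hl0
  · subst hl0
    simp at hyeq
    subst hyeq
    have := hdisj m hm
    rw [Set.eq_empty_iff_forall_notMem] at this
    exact this y ⟨by simpa using ha, hyB⟩
  obtain ⟨n', rfl⟩ := Nat.exists_eq_add_of_le hk
  obtain ⟨m', rfl⟩ := Nat.exists_eq_add_of_le hl
  have hbB : b ∈ foldSum n' B := by simpa using hb
  have haA : a ∈ foldSum m' A := by simpa using ha
  have h1 : l • x + k • a ∈ foldSum (l * (k + n') + k * m') A :=
    add_mem_foldSum_s18 (smul_mem_foldSum_s18 hxA l) (smul_mem_foldSum_s18 haA k)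
  have h2 : l • b + k • y ∈ foldSum (l * n' + k * (l + m')) B :=
    add_mem_foldSum_s18 (smul_mem_foldSum_s18 hbB l) (smul_mem_foldSum_s18 hyB k)
  have hNeq : l * n' + k * (l + m') = l * (k + n') + k * m' := by ring
  rw [hNeq] at h2
  have heq : l • x + k • a = l • b + k • y := by
    rw [hxeq, hyeq, smul_add, smul_add, smul_smul, smul_smul, mul_comm l k,
      add_assoc, add_comm ((k * l) • s) (k • a)]
  have hpos : 0 < l * (k + n') + k * m' := by
    have := Nat.mul_pos hl0 (show 0 < k + n' by omega)
    omega
  have hd := hdisj _ hpos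
  rw [Set.eq_empty_iff_forall_notMem] at hd
  exact hd _ ⟨h1, heq ▸ h2⟩
end
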